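/- arXiv:1506.08365 — 4 statements merged into one kernel-verified Lean document; each statement's English description precedes it below -/
import Mathlib

section
/- Let λ = a + ib ∈ ℂ with a < 0. Define φ : ℂ → ℂ by φ(0) = 0 and φ(ρ e^{iθ}) = exp(−(1/a + i b/a) log ρ) · e^{iθ} for ρ > 0. Then φ is a homeomorphism of ℂ onto itself satisfying φ(e^{λ t} w) = e^{−t} φ(w) for all t ∈ ℝ and w ∈ ℂ. -/
/-!
Writing `w = exp z`, the map `spiralMap c` acts on log-polar coordinates by the `ℝ`-linear map
`z ↦ c * z.re + I * z.im`. Hence it intertwines multiplication by `exp z` with multiplication by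
`exp (c * z.re + I * z.im)`, which for `z = λ t` and `c = -(1 + i b) / a` is `exp (-t)`; and the
maps of this family compose like these linear maps, so that for `0 < c.re` the map
`spiralMap c` has an inverse of the same form. Continuity at `0` comes from
`‖spiralMap c w‖ = ‖w‖ ^ c.re`.
-/

open Complex

noncomputable def spiralMap (c w : ℂ) : ℂ :=
  exp (c * Real.log ‖w‖) * (w / ‖w‖)

@[simp]
lemma spiralMap_zero (c : ℂ) : spiralMap c 0 = 0 := by simp [spiralMap]

lemma spiralMap_of_norm_eq_one (c : ℂ) {u : ℂ} (hu : ‖u‖ = 1) : spiralMap c u = u := by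
  simp [spiralMap, hu]

lemma spiralMap_exp_mul (c z : ℂ) {w : ℂ} (hw : w ≠ 0) :
    spiralMap c (exp z * w) = exp (c * z.re + I * z.im) * spiralMap c w := by
  have hρ : 0 < ‖w‖ := norm_pos_iff.2 hw
  have hnorm : ‖exp z * w‖ = Real.exp z.re * ‖w‖ := by rw [norm_mul, norm_exp]
  have hz : exp z = exp z.re * exp (I * z.im) := by
    rw [← Complex.exp_add, mul_comm I, re_add_im]
  rw [spiralMap, spiralMap, hnorm, Real.log_mul (Real.exp_pos _).ne' hρ.ne', Real.log_exp, hz]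
  push_cast
  rw [mul_add, Complex.exp_add, Complex.exp_add]
  field_simp

lemma spiralMap_spiralMap (c c' : ℂ) {w : ℂ} (hw : w ≠ 0) :
    spiralMap c (spiralMap c' w) = spiralMap (c * c'.re + I * c'.im) w := by
  have hρ : 0 < ‖w‖ := norm_pos_iff.2 hw
  have hu : ‖w / ‖w‖‖ = 1 := by
    rw [norm_div, norm_real, Real.norm_of_nonneg hρ.le, div_self hρ.ne']
  have hu0 : w / ‖w‖ ≠ 0 := norm_ne_zero_iff.1 (by rw [hu]; exact one_ne_zero)
  have hw' : spiralMap c' w = exp (c' * Real.log ‖w‖) * (w / ‖w‖) := rfl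
  rw [hw', spiralMap_exp_mul c _ hu0, spiralMap_of_norm_eq_one c hu, spiralMap, re_mul_ofReal,
    im_mul_ofReal]
  push_cast
  ring_nf

lemma spiralMap_one (w : ℂ) : spiralMap 1 w = w := by
  rcases eq_or_ne w 0 with rfl | hw
  · exact spiralMap_zero 1
  have hρ : (‖w‖ : ℂ) ≠ 0 := ofReal_ne_zero.2 (norm_ne_zero_iff.2 hw)
  rw [spiralMap, one_mul, ← ofReal_exp, Real.exp_log (norm_pos_iff.2 hw),
    mul_div_cancel₀ _ hρ]

lemma leftInverse_spiralMap {c c' : ℂ} (h : c' * c.re + I * c.im = 1) :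
    Function.LeftInverse (spiralMap c') (spiralMap c) := fun w => by
  rcases eq_or_ne w 0 with rfl | hw
  · simp
  · rw [spiralMap_spiralMap c' c hw, h, spiralMap_one]

lemma norm_spiralMap {c : ℂ} (hc : c.re ≠ 0) (w : ℂ) : ‖spiralMap c w‖ = ‖w‖ ^ c.re := by
  rcases eq_or_ne w 0 with rfl | hw
  · simp [Real.zero_rpow hc]
  have hρ : 0 < ‖w‖ := norm_pos_iff.2 hw
  rw [spiralMap, norm_mul, norm_div, norm_real, Real.norm_of_nonneg hρ.le, div_self hρ.ne',
    mul_one, norm_exp, re_mul_ofReal, Real.rpow_def_of_pos hρ, mul_comm]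

lemma continuous_spiralMap {c : ℂ} (hc : 0 < c.re) : Continuous (spiralMap c) := by
  refine continuous_iff_continuousAt.2 fun w => ?_
  rcases eq_or_ne w 0 with rfl | hw
  · rw [ContinuousAt, spiralMap_zero, tendsto_zero_iff_norm_tendsto_zero]
    simp_rw [norm_spiralMap hc.ne']
    have h := ((continuous_norm (E := ℂ)).rpow_const fun _ => Or.inr hc.le).tendsto 0
    rwa [norm_zero, Real.zero_rpow hc.ne'] at h
  · have hρ : (‖w‖ : ℂ) ≠ 0 := ofReal_ne_zero.2 (norm_ne_zero_iff.2 hw)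
    have hlog : ContinuousAt (fun z : ℂ => Real.log ‖z‖) w :=
      (Real.continuousAt_log (norm_ne_zero_iff.2 hw)).comp continuous_norm.continuousAt
    unfold spiralMap
    fun_prop (disch := exact hρ)

lemma isHomeomorph_spiralMap {c : ℂ} (hc : 0 < c.re) : IsHomeomorph (spiralMap c) := by
  set c' : ℂ := ⟨1 / c.re, -c.im / c.re⟩
  have hc' : 0 < c'.re := one_div_pos.2 hc
  have hc₀ : c.re ≠ 0 := hc.ne'
  have h₁ : c' * c.re + I * c.im = 1 := by
    apply Complex.ext <;> simp only [c', mul_re, mul_im, add_re, add_im, ofReal_re, ofReal_im,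
      I_re, I_im, one_re, one_im] <;> field_simp <;> ring
  have h₂ : c * c'.re + I * c'.im = 1 := by
    apply Complex.ext <;> simp only [c', mul_re, mul_im, add_re, add_im, ofReal_re, ofReal_im,
      I_re, I_im, one_re, one_im] <;> field_simp <;> ring
  exact (Homeomorph.mk
    ⟨spiralMap c, spiralMap c', leftInverse_spiralMap h₁, leftInverse_spiralMap h₂⟩
    (continuous_spiralMap hc) (continuous_spiralMap hc')).isHomeomorph

/-- Let `λ = a + ib` with `a < 0`. Define `φ(0) = 0` and
`φ(ρ e^{iθ}) = exp(−(1/a + i b/a) log ρ) · e^{iθ}` for `ρ > 0`.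
Then `φ` is a homeomorphism of `ℂ` with `φ(e^{λ t} w) = e^{−t} φ(w)` for all `t ∈ ℝ`, `w ∈ ℂ`. -/
theorem stmt1 (a b : ℝ) (ha : a < 0)
    (φ : ℂ → ℂ) (hφ0 : φ 0 = 0)
    (hφ : ∀ w : ℂ, w ≠ 0 →
      φ w = Complex.exp (-((1 / a : ℂ) + Complex.I * (b / a)) * (Real.log (‖w‖) : ℂ))
        * (w / (‖w‖ : ℂ))) :
    IsHomeomorph φ ∧
      ∀ (t : ℝ) (w : ℂ),
        φ (Complex.exp ((a + b * Complex.I) * t) * w) = Complex.exp (-(t : ℂ)) * φ w := by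
  set c : ℂ := -((1 / a : ℂ) + I * (b / a))
  have hφc : φ = spiralMap c := funext fun w => by
    rcases eq_or_ne w 0 with rfl | hw
    · rw [hφ0, spiralMap_zero]
    · exact hφ w hw
  have hc : 0 < c.re := by simpa [c] using ha
  refine ⟨hφc ▸ isHomeomorph_spiralMap hc, fun t w => ?_⟩
  rcases eq_or_ne w 0 with rfl | hw
  · simp [hφ0]
  have ha' : (a : ℂ) ≠ 0 := ofReal_ne_zero.2 ha.ne
  rw [hφc, spiralMap_exp_mul _ _ hw]
  congr 2
  simp only [c, re_mul_ofReal, im_mul_ofReal, add_re, add_im, ofReal_re, ofReal_im,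
    re_ofReal_mul, im_ofReal_mul, I_re, I_im]
  push_cast
  field_simp
  ring
end

section
/- Let θ₁, θ₂ be nonzero real numbers and suppose T : 𝔻 → 𝔻 is a homeomorphism of the open unit disc such that T(e^{i θ₁ t} z) = e^{i θ₂ t} T(z) for all t ≥ 0 and all z ∈ 𝔻. Then θ₂/θ₁ ∈ {1, −1}, i.e. |θ₁| = |θ₂|. -/
open Complex

/-!
Fix a point `z ≠ 0` of the disc with `T z ≠ 0`. For `t ≥ 0`, the rotation `e^{iθ₁t}` fixes `z`
iff `e^{iθ₂t}` fixes `T z`, by injectivity of `T`; so `e^{iθ₁t} = 1 ↔ e^{iθ₂t} = 1`.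
At the period `t = 2π/|θ₁|` this forces `|θ₂|` to be a nonzero integer multiple of `|θ₁|`,
and symmetrically, hence `|θ₁| = |θ₂|`.
-/

theorem exp_ofReal_mul_ofReal_mul_I_eq_one_iff {θ t : ℝ} :
    exp (θ * t * I) = 1 ↔ ∃ n : ℤ, θ * t = n * (2 * Real.pi) := by
  rw [exp_eq_one_iff]
  refine exists_congr fun n => ?_
  rw [show (θ : ℂ) * t * I = ((θ * t : ℝ) : ℂ) * I by push_cast; ring,
    show (n : ℂ) * (2 * Real.pi * I) = ((n * (2 * Real.pi) : ℝ) : ℂ) * I by push_cast; ring,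
    mul_left_inj' I_ne_zero, ofReal_inj]

theorem exp_mul_two_pi_div_abs_mul_I {θ : ℝ} (hθ : θ ≠ 0) :
    exp (θ * (2 * Real.pi / |θ| : ℝ) * I) = 1 := by
  rw [exp_ofReal_mul_ofReal_mul_I_eq_one_iff]
  rcases abs_choice θ with h | h
  · exact ⟨1, by rw [h]; field_simp; simp⟩
  · exact ⟨-1, by rw [h]; field_simp; simp⟩

theorem abs_le_abs_of_exp_mul_I_eq_one_imp {θ₁ θ₂ : ℝ} (hθ₁ : θ₁ ≠ 0) (hθ₂ : θ₂ ≠ 0)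
    (h : ∀ t : ℝ, 0 ≤ t → exp (θ₁ * t * I) = 1 → exp (θ₂ * t * I) = 1) :
    |θ₁| ≤ |θ₂| := by
  obtain ⟨n, hn⟩ := exp_ofReal_mul_ofReal_mul_I_eq_one_iff.1
    (h _ (by positivity) (exp_mul_two_pi_div_abs_mul_I hθ₁))
  have hθ₂_eq : θ₂ = n * |θ₁| := by
    field_simp at hn
    linarith
  have hn0 : n ≠ 0 := by
    rintro rfl
    simp [hθ₂] at hθ₂_eq
  calc |θ₁| = 1 * |θ₁| := (one_mul _).symm
    _ ≤ |(n : ℝ)| * |θ₁| := by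
        gcongr
        exact_mod_cast Int.one_le_abs hn0
    _ = |θ₂| := by rw [hθ₂_eq, abs_mul, abs_abs]

theorem exp_mul_I_eq_one_iff_of_intertwines {p : ℂ → Prop} {θ₁ θ₂ : ℝ}
    {T : {z : ℂ // p z} → {z : ℂ // p z}} (hinj : T.Injective)
    (hT : ∀ t : ℝ, 0 ≤ t → ∀ z : {z : ℂ // p z}, ∀ hz : p (exp (θ₁ * t * I) * z),
      (T ⟨exp (θ₁ * t * I) * z, hz⟩ : ℂ) = exp (θ₂ * t * I) * T z)
    {z : {z : ℂ // p z}} (hz : (z : ℂ) ≠ 0) (hTz : (T z : ℂ) ≠ 0)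
    {t : ℝ} (ht : 0 ≤ t) (hmem : p (exp (θ₁ * t * I) * z)) :
    exp (θ₁ * t * I) = 1 ↔ exp (θ₂ * t * I) = 1 := by
  rw [← mul_eq_right₀ hz, ← mul_eq_right₀ hTz, ← hT t ht z hmem, ← Subtype.ext_iff,
    hinj.eq_iff, Subtype.ext_iff]

theorem exists_ne_zero_and_apply_ne_zero_of_injective
    {T : {z : ℂ // ‖z‖ < 1} → {z : ℂ // ‖z‖ < 1}} (hinj : T.Injective) :
    ∃ z : {z : ℂ // ‖z‖ < 1}, (z : ℂ) ≠ 0 ∧ (T z : ℂ) ≠ 0 := by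
  by_contra! h
  have h₂ : (T ⟨1 / 2, by norm_num⟩ : ℂ) = 0 := h _ (by norm_num)
  have h₃ : (T ⟨1 / 3, by norm_num⟩ : ℂ) = 0 := h _ (by norm_num)
  have := congrArg Subtype.val (hinj (Subtype.ext (h₂.trans h₃.symm)))
  norm_num at this

/-- If `θ₁, θ₂` are nonzero reals and `T` is a homeomorphism of the open unit disc
with `T(e^{iθ₁ t} z) = e^{iθ₂ t} T(z)` for all `t ≥ 0` and `z` in the disc,
then `θ₂/θ₁ = ±1`, i.e. `|θ₁| = |θ₂|`. -/
theorem stmt3 (θ₁ θ₂ : ℝ) (hθ₁ : θ₁ ≠ 0) (hθ₂ : θ₂ ≠ 0)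
    (T : {z : ℂ // ‖z‖ < 1} ≃ₜ {z : ℂ // ‖z‖ < 1})
    (hT : ∀ t : ℝ, 0 ≤ t → ∀ z : {z : ℂ // ‖z‖ < 1},
      ∀ hz : ‖Complex.exp (θ₁ * t * Complex.I) * (z : ℂ)‖ < 1,
        (T ⟨Complex.exp (θ₁ * t * Complex.I) * (z : ℂ), hz⟩ : ℂ)
          = Complex.exp (θ₂ * t * Complex.I) * (T z : ℂ)) :
    θ₂ / θ₁ = 1 ∨ θ₂ / θ₁ = -1 := by
  obtain ⟨z, hz, hTz⟩ := exists_ne_zero_and_apply_ne_zero_of_injective T.injective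
  have hrot : ∀ t : ℝ, ‖exp (θ₁ * t * I) * z‖ < 1 := fun t => by
    rw [norm_mul, ← ofReal_mul, norm_exp_ofReal_mul_I, one_mul]
    exact z.2
  have hperiod (t : ℝ) (ht : 0 ≤ t) : exp (θ₁ * t * I) = 1 ↔ exp (θ₂ * t * I) = 1 :=
    exp_mul_I_eq_one_iff_of_intertwines (p := fun z => ‖z‖ < 1) T.injective hT hz hTz ht
      (hrot t)
  have habs : |θ₂| = |θ₁| := le_antisymm
    (abs_le_abs_of_exp_mul_I_eq_one_imp hθ₂ hθ₁ fun t ht => (hperiod t ht).2)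
    (abs_le_abs_of_exp_mul_I_eq_one_imp hθ₁ hθ₂ fun t ht => (hperiod t ht).1)
  rcases abs_eq_abs.1 habs with h | h
  · exact Or.inl (by rw [h, div_self hθ₁])
  · exact Or.inr (by rw [h, neg_div, div_self hθ₁])
end

section
/- The homeomorphism f : 𝔻 → 𝔻 defined by f(z) = z · exp(i · ln(1 − |z|)) (and f(0) = 0) has no continuous extension to any point of the boundary ∂𝔻: for every p with |p| = 1, the limit of f(z) as z → p (with z ∈ 𝔻) does not exist. -/
/-!
Along the radius `z = (1 - eˢ) p`, `s → -∞`, one has `f z = z · e^{is}`. A limit `w` of `f` at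
`p` would therefore force `e^{is} → w / p` as `s → -∞`, which is impossible for a nonconstant
periodic function.
-/

open Complex Filter Function Topology

theorem Function.Periodic.eq_of_tendsto_atBot {α : Type*} [TopologicalSpace α] [T2Space α]
    {f : ℝ → α} {c : ℝ} (hf : Periodic f c) (hc : c ≠ 0) {a : α}
    (h : Tendsto f atBot (𝓝 a)) (x : ℝ) : f x = a := by
  wlog hc_pos : 0 < c generalizing c
  · exact this hf.neg (neg_ne_zero.mpr hc) (neg_pos.mpr (hc.lt_or_gt.resolve_right hc_pos))
  have hseq : Tendsto (fun n : ℕ => x - n * c) atTop atBot :=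
    tendsto_atBot_add_const_left _ x <|
      tendsto_neg_atTop_atBot.comp (tendsto_natCast_atTop_atTop.atTop_mul_const hc_pos)
  refine tendsto_nhds_unique tendsto_const_nhds ((h.comp hseq).congr fun n => ?_)
  exact hf.sub_nat_mul_eq n

theorem not_tendsto_exp_ofReal_mul_I_atBot (a : ℂ) :
    ¬ Tendsto (fun s : ℝ => exp (s * I)) atBot (𝓝 a) := by
  intro h
  have hper : Periodic (fun s : ℝ => exp (s * I)) (2 * Real.pi) := fun s => by
    simpa using exp_mul_I_periodic (s : ℂ)
  have h0 := hper.eq_of_tendsto_atBot Real.two_pi_pos.ne' h 0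
  have hπ := hper.eq_of_tendsto_atBot Real.two_pi_pos.ne' h Real.pi
  simp only [ofReal_zero, zero_mul, exp_zero, exp_pi_mul_I] at h0 hπ
  norm_num [← h0] at hπ

theorem tendsto_ofReal_one_sub_exp_mul_nhdsWithin_ball {p : ℂ} (hp : ‖p‖ ≤ 1) :
    Tendsto (fun s : ℝ => ((1 - Real.exp s : ℝ) : ℂ) * p) atBot
      (𝓝[{z : ℂ | ‖z‖ < 1}] p) := by
  refine tendsto_nhdsWithin_of_tendsto_nhds_of_eventually_within _ ?_ ?_
  · have h : Tendsto (fun s : ℝ => 1 - Real.exp s) atBot (𝓝 1) := by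
      simpa using Real.tendsto_exp_atBot.const_sub (1 : ℝ)
    simpa using ((continuous_ofReal.tendsto 1).comp h).mul_const p
  · filter_upwards [eventually_lt_atBot 0] with s hs
    have h1 : 0 < 1 - Real.exp s := by linarith [Real.exp_lt_one_iff.mpr hs]
    have h2 : 1 - Real.exp s < 1 := by linarith [Real.exp_pos s]
    rw [norm_mul, norm_real, Real.norm_of_nonneg h1.le]
    nlinarith [norm_nonneg p]

theorem norm_ofReal_one_sub_exp_mul {p : ℂ} (hp : ‖p‖ = 1) {s : ℝ} (hs : s ≤ 0) :
    ‖((1 - Real.exp s : ℝ) : ℂ) * p‖ = 1 - Real.exp s := by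
  rw [norm_mul, norm_real, hp, mul_one, Real.norm_of_nonneg]
  linarith [Real.exp_le_one_iff.mpr hs]

/-- The homeomorphism `f(z) = z · exp(i ln(1 − |z|))` of the unit disc has no continuous
extension at any boundary point: for every `p` with `|p| = 1`, `f(z)` has no limit as
`z → p` within the disc. -/
theorem stmt6 (f : ℂ → ℂ)
    (hf : ∀ z : ℂ, f z = z * Complex.exp (Complex.I * (Real.log (1 - ‖z‖) : ℂ)))
    (p : ℂ) (hp : ‖p‖ = 1) :
    ¬ ∃ w : ℂ, Filter.Tendsto f (nhdsWithin p {z : ℂ | ‖z‖ < 1}) (nhds w) := by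
  rintro ⟨w, hw⟩
  let z : ℝ → ℂ := fun s => ((1 - Real.exp s : ℝ) : ℂ) * p
  have hz : Tendsto z atBot (𝓝[{z : ℂ | ‖z‖ < 1}] p) :=
    tendsto_ofReal_one_sub_exp_mul_nhdsWithin_ball hp.le
  have hfz : ∀ s < 0, f (z s) / z s = exp (s * I) := by
    intro s hs
    have hz0 : z s ≠ 0 := by
      rw [← norm_ne_zero_iff, norm_ofReal_one_sub_exp_mul hp hs.le]
      linarith [Real.exp_lt_one_iff.mpr hs]
    rw [hf, norm_ofReal_one_sub_exp_mul hp hs.le, sub_sub_cancel, Real.log_exp,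
      mul_div_cancel_left₀ _ hz0, mul_comm]
  have hp0 : p ≠ 0 := norm_ne_zero_iff.mp (by simp [hp])
  have hexp : Tendsto (fun s : ℝ => exp (s * I)) atBot (𝓝 (w / p)) :=
    ((hw.comp hz).div (tendsto_nhdsWithin_iff.mp hz).1 hp0).congr' <| by
      filter_upwards [eventually_lt_atBot 0] with s hs using hfz s hs
  exact not_tendsto_exp_ofReal_mul_I_atBot _ hexp
end

section
/- Let τ : ℂ → ℂ be a homeomorphism satisfying τ(z + it) = τ(z) + it for all z ∈ ℂ and all t ∈ ℝ. Then there exist a homeomorphism u : ℝ → ℝ and a continuous function v : ℝ → ℝ such that τ(x + iy) = u(x) + i(y + v(x)) for all x, y ∈ ℝ. -/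
open Complex

/-- If `τ : ℂ → ℂ` is a homeomorphism with `τ(z + it) = τ(z) + it` for all `z ∈ ℂ`, `t ∈ ℝ`,
then there exist a homeomorphism `u : ℝ → ℝ` and a continuous `v : ℝ → ℝ` with
`τ(x + iy) = u(x) + i(y + v(x))` for all real `x, y`. -/
theorem stmt7 (τ : ℂ ≃ₜ ℂ)
    (hτ : ∀ (z : ℂ) (t : ℝ), τ (z + t * Complex.I) = τ z + t * Complex.I) :
    ∃ (u : ℝ ≃ₜ ℝ) (v : ℝ → ℝ), Continuous v ∧
      ∀ x y : ℝ, τ ((x : ℂ) + y * Complex.I) = ((u x : ℝ) : ℂ) + ((y + v x : ℝ) : ℂ) * Complex.I := by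
  have hτ' : ∀ (z : ℂ) (t : ℝ), τ.symm (z + t * Complex.I) = τ.symm z + t * Complex.I := by
    intro z t
    apply τ.injective
    rw [hτ, τ.apply_symm_apply, τ.apply_symm_apply]
  have key : ∀ z : ℂ, τ z = τ (z.re : ℂ) + (z.im : ℝ) * Complex.I := by
    intro z
    conv_lhs => rw [← Complex.re_add_im z]
    exact hτ _ _
  have key' : ∀ z : ℂ, τ.symm z = τ.symm (z.re : ℂ) + (z.im : ℝ) * Complex.I := by
    intro z
    conv_lhs => rw [← Complex.re_add_im z]
    exact hτ' _ _
  have hre : ∀ z : ℂ, (τ z).re = (τ (z.re : ℂ)).re := by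
    intro z; rw [key z]; simp
  have hre' : ∀ z : ℂ, (τ.symm z).re = (τ.symm (z.re : ℂ)).re := by
    intro z; rw [key' z]; simp
  have hli : ∀ x : ℝ, (τ.symm (((τ (x : ℂ)).re : ℝ) : ℂ)).re = x := by
    intro x
    rw [← hre' (τ (x : ℂ)), τ.symm_apply_apply]
    simp
  have hri : ∀ x : ℝ, (τ (((τ.symm (x : ℂ)).re : ℝ) : ℂ)).re = x := by
    intro x
    rw [← hre (τ.symm (x : ℂ)), τ.apply_symm_apply]
    simp
  refine ⟨⟨⟨fun x => (τ (x : ℂ)).re, fun x => (τ.symm (x : ℂ)).re, hli, hri⟩,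
      Complex.continuous_re.comp (τ.continuous.comp Complex.continuous_ofReal),
      Complex.continuous_re.comp (τ.symm.continuous.comp Complex.continuous_ofReal)⟩,
    fun x => (τ (x : ℂ)).im,
    Complex.continuous_im.comp (τ.continuous.comp Complex.continuous_ofReal), ?_⟩
  intro x y
  rw [hτ]
  simp only [Homeomorph.homeomorph_mk_coe, Equiv.coe_fn_mk]
  conv_lhs => rw [← Complex.re_add_im (τ (x : ℂ))]
  push_cast
  ring
end
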